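/- Let eta : A (x) A -> k be a linear map and lambda in k such that eta(x (x) y) = lambda * eta(y (x) x) for all x, y in A. Then the identity sum eta(x (x) y_(1)*z_(1)) eta(y_(2) (x) z_(2)) = sum eta(y_(1) (x) z_(1)) eta(x (x) y_(2)*z_(2)) holds for all x, y, z in A if and only if the identity sum eta(x_(1)*y_(1) (x) z) eta(x_(2) (x) y_(2)) = sum eta(x_(1) (x) y_(1)) eta(x_(2)*y_(2) (x) z) holds for all x, y, z in A. -/

import Mathlib

/-!
Common framework: convolution algebras, Hopf 2-cocycles, the Nichols algebra `B` of Cartan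
type `A₂` with `q = -1`, its bosonization `A = B # H`, bilinear forms on `B` and their
extensions to `A ⊗ A`, following García–Sánchez, "Hopf cocycles associated to pointed and
copointed deformations over S₃" (arXiv:2108.11432).
-/

open scoped TensorProduct
open TensorProduct

noncomputable section

namespace PaperA2

section Defs

variable (k : Type*) [Field k]

section Conv

variable {C : Type*} [AddCommMonoid C] [Module k C] [CoalgebraStruct k C]

/-- Convolution product on linear functionals on a coalgebra:
`(f * g)(c) = ∑ f(c₁) g(c₂)`. -/
def conv (f g : C →ₗ[k] k) : C →ₗ[k] k :=
  LinearMap.mul' k k ∘ₗ TensorProduct.map f g ∘ₗ CoalgebraStruct.comul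

/-- The unit of the convolution algebra: the counit. -/
def convOne : C →ₗ[k] k := CoalgebraStruct.counit

/-- Convolution invertibility. -/
def IsConvUnit (f : C →ₗ[k] k) : Prop :=
  ∃ g, conv k f g = convOne k ∧ conv k g f = convOne k

/-- Convolution powers `f^{*n}`. -/
def convPow (f : C →ₗ[k] k) : ℕ → (C →ₗ[k] k)
  | 0 => convOne k
  | n + 1 => conv k f (convPow f n)

/-- The convolution exponential `∑_{n=0}^{4} (1/n!) f^{*n}` (all higher convolution powers
vanish for the functionals considered here). -/
def expConv (f : C →ₗ[k] k) : C →ₗ[k] k :=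
  ∑ n ∈ Finset.range 5, ((n.factorial : k)⁻¹ • convPow k f n)

end Conv

section Bialg

variable {A : Type*} [Ring A] [Bialgebra k A]

/-- The left-hand side `(σ ⊗ ε) * σ(m ⊗ id)` of the Hopf 2-cocycle condition, as a
functional on `(A ⊗ A) ⊗ A`: on pure tensors it is `x ⊗ y ⊗ z ↦ ∑ σ(x₁ ⊗ y₁) σ(x₂y₂ ⊗ z)`. -/
def hopfLHS (σ : A ⊗[k] A →ₗ[k] k) : (A ⊗[k] A) ⊗[k] A →ₗ[k] k :=
  conv k (LinearMap.mul' k k ∘ₗ TensorProduct.map σ CoalgebraStruct.counit)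
    (σ ∘ₗ TensorProduct.map (LinearMap.mul' k A) LinearMap.id)

/-- The right-hand side `(ε ⊗ σ) * σ(id ⊗ m)`:
on pure tensors it is `x ⊗ y ⊗ z ↦ ∑ σ(y₁ ⊗ z₁) σ(x ⊗ y₂z₂)`. -/
def hopfRHS (σ : A ⊗[k] A →ₗ[k] k) : (A ⊗[k] A) ⊗[k] A →ₗ[k] k :=
  conv k
    (LinearMap.mul' k k ∘ₗ TensorProduct.map CoalgebraStruct.counit σ ∘ₗ
      (TensorProduct.assoc k A A A).toLinearMap)
    (σ ∘ₗ TensorProduct.map LinearMap.id (LinearMap.mul' k A) ∘ₗ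
      (TensorProduct.assoc k A A A).toLinearMap)

/-- A Hopf 2-cocycle: a convolution invertible `σ : A ⊗ A →ₗ k` satisfying
`∑ σ(x₁ ⊗ y₁) σ(x₂y₂ ⊗ z) = ∑ σ(y₁ ⊗ z₁) σ(x ⊗ y₂z₂)` for all `x, y, z ∈ A`. -/
def IsHopf2Cocycle (σ : A ⊗[k] A →ₗ[k] k) : Prop :=
  IsConvUnit k σ ∧ hopfLHS k σ = hopfRHS k σ

/-- The action `α ⇀ σ`: `x ⊗ y ↦ ∑ α(x₁) α(y₁) σ(x₂ ⊗ y₂) α⁻¹(x₃ y₃)`. -/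
def act (α αinv : A →ₗ[k] k) (σ : A ⊗[k] A →ₗ[k] k) : A ⊗[k] A →ₗ[k] k :=
  conv k (conv k (LinearMap.mul' k k ∘ₗ TensorProduct.map α α) σ)
    (αinv ∘ₗ LinearMap.mul' k A)

/-- `σ'` is cohomologous to `σ`: `σ' = α ⇀ σ` for some convolution invertible `α : A → k`. -/
def IsCohomologous (σ σ' : A ⊗[k] A →ₗ[k] k) : Prop :=
  ∃ α αinv : A →ₗ[k] k,
    conv k α αinv = convOne k ∧ conv k αinv α = convOne k ∧ act k α αinv σ = σ'

/-- First commutation condition `[η(id ⊗ m), ε ⊗ η]_* = 0`; on pure tensors it reads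
`∑ η(x ⊗ y₁z₁) η(y₂ ⊗ z₂) = ∑ η(y₁ ⊗ z₁) η(x ⊗ y₂z₂)` for all `x, y, z ∈ A`. -/
def Comm1 (η : A ⊗[k] A →ₗ[k] k) : Prop :=
  conv k (η ∘ₗ TensorProduct.map (LinearMap.id (M := A)) (LinearMap.mul' k A))
      (LinearMap.mul' k k ∘ₗ TensorProduct.map CoalgebraStruct.counit η)
    = conv k (LinearMap.mul' k k ∘ₗ TensorProduct.map CoalgebraStruct.counit η)
      (η ∘ₗ TensorProduct.map (LinearMap.id (M := A)) (LinearMap.mul' k A))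

/-- Second commutation condition `[η(m ⊗ id), η ⊗ ε]_* = 0`; on pure tensors it reads
`∑ η(x₁y₁ ⊗ z) η(x₂ ⊗ y₂) = ∑ η(x₁ ⊗ y₁) η(x₂y₂ ⊗ z)` for all `x, y, z ∈ A`. -/
def Comm2 (η : A ⊗[k] A →ₗ[k] k) : Prop :=
  conv k (η ∘ₗ TensorProduct.map (LinearMap.mul' k A) (LinearMap.id (M := A)))
      (LinearMap.mul' k k ∘ₗ TensorProduct.map η CoalgebraStruct.counit)
    = conv k (LinearMap.mul' k k ∘ₗ TensorProduct.map η CoalgebraStruct.counit)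
      (η ∘ₗ TensorProduct.map (LinearMap.mul' k A) (LinearMap.id (M := A)))

end Bialg

section Bside

variable {B : Type*} [Ring B] [Algebra k B]

/-- `x12 := x1 x2 - q12 x2 x1`. -/
def x12 (q12 : k) (X1 X2 : B) : B := X1 * X2 - q12 • (X2 * X1)

/-- The PBW basis `(1, x1, x2, x12, x12 x1, x2 x1, x2 x12, x2 x12 x1)` of `B`. -/
def bbVec (q12 : k) (X1 X2 : B) : Fin 8 → B :=
  ![1, X1, X2, x12 k q12 X1 X2, x12 k q12 X1 X2 * X1, X2 * X1,
    X2 * x12 k q12 X1 X2, X2 * x12 k q12 X1 X2 * X1]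

/-- The bilinear form on `B` determined by a matrix of values on the basis `bB`. -/
def ofMat (bB : Module.Basis (Fin 8) k B) (M : Fin 8 → Fin 8 → k) : B →ₗ[k] B →ₗ[k] k :=
  bB.constr k fun i => bB.constr k fun j => M i j

/-- Hochschild 2-cocycle with trivial coefficients:
`ε(a) η(b,c) + η(a,bc) = η(ab,c) + η(a,b) ε(c)`. -/
def IsHochschild2Cocycle (ε : B →ₐ[k] k) (η : B →ₗ[k] B →ₗ[k] k) : Prop :=
  ∀ a b c : B, ε a * η b c + η a (b * c) = η (a * b) c + η a b * ε c

/-- Hochschild 2-coboundary with trivial coefficients: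
`η(a,b) = ε(a) f(b) - f(ab) + f(a) ε(b)` for some linear `f : B → k`. -/
def IsHochschild2Coboundary (ε : B →ₐ[k] k) (η : B →ₗ[k] B →ₗ[k] k) : Prop :=
  ∃ f : B →ₗ[k] k, ∀ a b : B, η a b = ε a * f b - f (a * b) + f a * ε b

/-- `Γ`-invariance of a bilinear form on `B` with respect to the automorphisms `φ1, φ2`
given by conjugation by `g1, g2`. -/
def IsGammaInvariant (φ1 φ2 : B →ₐ[k] B) (η : B →ₗ[k] B →ₗ[k] k) : Prop :=
  (∀ a b : B, η (φ1 a) (φ1 b) = η a b) ∧ (∀ a b : B, η (φ2 a) (φ2 b) = η a b)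

/-- The defining properties of the conjugation automorphisms `φᵢ(xⱼ) = qᵢⱼ xⱼ`. -/
def PhiSetup (q12 : k) (X1 X2 : B) (φ1 φ2 : B →ₐ[k] B) : Prop :=
  Function.Bijective φ1 ∧ Function.Bijective φ2 ∧
    φ1 X1 = (-1 : k) • X1 ∧ φ1 X2 = q12 • X2 ∧
    φ2 X1 = (-q12) • X1 ∧ φ2 X2 = (-1 : k) • X2

/-- Matrix of values of `ξ0` on the basis. -/
def mXi0 : Fin 8 → Fin 8 → k := fun i j => if i = 0 ∧ j = 0 then 1 else 0

/-- Matrix of values of `ξ1 = ξ₁¹` on the basis. -/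
def mXi1 : Fin 8 → Fin 8 → k := fun i j => if i = 1 ∧ j = 1 then 1 else 0

/-- Matrix of values of `ξ2 = ξ₂²` on the basis. -/
def mXi2 : Fin 8 → Fin 8 → k := fun i j => if i = 2 ∧ j = 2 then 1 else 0

/-- Matrix of values of `ξ121 = ξ²₁₂₁` on the basis
(order: 1, x1, x2, x12, x12x1, x2x1, x2x12, x2x12x1). -/
def mXi121 (q12 : k) : Fin 8 → Fin 8 → k := fun i j =>
  if i = 2 ∧ j = 4 then 1
  else if i = 6 ∧ j = 1 then 1
  else if i = 5 ∧ j = 5 then 1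
  else if i = 3 ∧ j = 3 then 1
  else if i = 3 ∧ j = 5 then -q12
  else if i = 5 ∧ j = 3 then -q12
  else 0

/-- Matrix of values of `ξ212 = ξ¹₂₁₂` on the basis. -/
def mXi212 : Fin 8 → Fin 8 → k := fun i j =>
  if i = 1 ∧ j = 6 then 1
  else if i = 3 ∧ j = 3 then 1
  else if i = 4 ∧ j = 2 then 1
  else 0

/-- Matrix of values of the bilinear form `T_λ` of the Hopf 2-cocycle `σ_λ` on the basis
(here `q21 = -q12`). -/
def mT (q12 l1 l2 l12 : k) : Fin 8 → Fin 8 → k := fun i j =>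
  if i = 0 ∧ j = 0 then 1
  else if i = 1 ∧ j = 1 then l1
  else if i = 2 ∧ j = 2 then l2
  else if i = 3 ∧ j = 3 then l12
  else if i = 1 ∧ j = 6 then l12
  else if i = 2 ∧ j = 4 then 2 * q12 * l1 * l2
  else if i = 5 ∧ j = 5 then -(-q12) * l1 * l2
  else if i = 6 ∧ j = 6 then -q12 * l2 * l12
  else if i = 4 ∧ j = 2 then 2 * q12 * l1 * l2 + l12
  else if i = 4 ∧ j = 4 then q12 * l12 * l1 + 4 * l1 ^ 2 * l2
  else if i = 7 ∧ j = 7 then q12 * l2 * l12 * l1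
  else 0

/-- The cocycle `ξ0`. -/
def xi0 (bB : Module.Basis (Fin 8) k B) : B →ₗ[k] B →ₗ[k] k := ofMat k bB (mXi0 k)

/-- The cocycle `ξ1`. -/
def xi1 (bB : Module.Basis (Fin 8) k B) : B →ₗ[k] B →ₗ[k] k := ofMat k bB (mXi1 k)

/-- The cocycle `ξ2`. -/
def xi2 (bB : Module.Basis (Fin 8) k B) : B →ₗ[k] B →ₗ[k] k := ofMat k bB (mXi2 k)

/-- The cocycle `ξ121`. -/
def xi121 (q12 : k) (bB : Module.Basis (Fin 8) k B) : B →ₗ[k] B →ₗ[k] k :=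
  ofMat k bB (mXi121 k q12)

/-- The cocycle `ξ212`. -/
def xi212 (bB : Module.Basis (Fin 8) k B) : B →ₗ[k] B →ₗ[k] k := ofMat k bB (mXi212 k)

/-- Number of occurrences of the letter `x1` in each basis monomial. -/
def n1 : Fin 8 → ℕ := ![0, 1, 0, 1, 2, 1, 1, 2]

/-- Number of occurrences of the letter `x2` in each basis monomial. -/
def n2 : Fin 8 → ℕ := ![0, 0, 1, 1, 1, 1, 2, 2]

/-- `χ_{b_j}(g_i)`: the scalar with `g_i b_j g_i⁻¹ = χ_{b_j}(g_i) b_j`, namely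
`q_{i1}^{n1(j)} q_{i2}^{n2(j)}` with `q11 = q22 = -1`, `q21 = -q12`. -/
def chiB (q12 : k) : Fin 2 → Fin 8 → k := fun i j =>
  if i = 0 then (-1 : k) ^ n1 j * q12 ^ n2 j
  else (-q12) ^ n1 j * (-1 : k) ^ n2 j

/-- `χ_{b_j}(g1^a g2^c)`. -/
def chiG (q12 : k) (j : Fin 8) (a c : Fin 2) : k :=
  chiB k q12 0 j ^ (a : ℕ) * chiB k q12 1 j ^ (c : ℕ)

variable {A : Type*} [Ring A] [Bialgebra k A]

/-- The extension `η_A : A ⊗ A →ₗ k` of a bilinear form `η` on `B`, determined on the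
basis of `A ⊗ A` by `η_A(b g ⊗ b' g') = χ_{b'}(g) η(b, b')`. -/
def extA (q12 : k) (bB : Module.Basis (Fin 8) k B)
    (bA : Module.Basis (Fin 8 × Fin 2 × Fin 2) k A)
    (η : B →ₗ[k] B →ₗ[k] k) : A ⊗[k] A →ₗ[k] k :=
  (bA.tensorProduct bA).constr k fun p =>
    chiG k q12 p.2.1 p.1.2.1 p.1.2.2 * η (bB p.1.1) (bB p.2.1)

/-- The Hopf 2-cocycle `σ_λ : A ⊗ A → k` associated to the cleft object `E(λ)`. -/
def sigmaLam (q12 : k) (bB : Module.Basis (Fin 8) k B)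
    (bA : Module.Basis (Fin 8 × Fin 2 × Fin 2) k A) (l1 l2 l12 : k) : A ⊗[k] A →ₗ[k] k :=
  extA k q12 bB bA (ofMat k bB (mT k q12 l1 l2 l12))

end Bside

/-- All defining data of the situation of the paper: `q12 = ±1`; `B` is the Nichols algebra
of Cartan type `A₂` with `q = -1` (presented by `x1² = x2² = x12² = 0`, with its PBW basis
and its augmentation `εB`), and `A = B # H` is a Hopf algebra containing `x1, x2, g1, g2`
subject to the group/commutation relations, with its basis `{b g1^a g2^c}` and the standard
comultiplication and counit on generators. -/
structure Setup (q12 : k) {B : Type*} [Ring B] [Algebra k B] (X1 X2 : B)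
    (bB : Module.Basis (Fin 8) k B) (εB : B →ₐ[k] k)
    {A : Type*} [Ring A] [HopfAlgebra k A] (a1 a2 g1 g2 : A)
    (bA : Module.Basis (Fin 8 × Fin 2 × Fin 2) k A) : Prop where
  hq : q12 = 1 ∨ q12 = -1
  hbB : ∀ j, bB j = bbVec k q12 X1 X2 j
  hX1 : X1 ^ 2 = 0
  hX2 : X2 ^ 2 = 0
  hX12 : x12 k q12 X1 X2 ^ 2 = 0
  hε1 : εB X1 = 0
  hε2 : εB X2 = 0
  hbA : ∀ p : Fin 8 × Fin 2 × Fin 2,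
    bA p = bbVec k q12 a1 a2 p.1 * g1 ^ (p.2.1 : ℕ) * g2 ^ (p.2.2 : ℕ)
  hg1 : g1 ^ 2 = 1
  hg2 : g2 ^ 2 = 1
  hgg : g1 * g2 = g2 * g1
  hg1a1 : g1 * a1 = (-1 : k) • (a1 * g1)
  hg1a2 : g1 * a2 = q12 • (a2 * g1)
  hg2a1 : g2 * a1 = (-q12) • (a1 * g2)
  hg2a2 : g2 * a2 = (-1 : k) • (a2 * g2)
  ha1 : a1 ^ 2 = 0
  ha2 : a2 ^ 2 = 0
  ha12 : x12 k q12 a1 a2 ^ 2 = 0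
  hcomul_g1 : Coalgebra.comul (R := k) g1 = g1 ⊗ₜ[k] g1
  hcomul_g2 : Coalgebra.comul (R := k) g2 = g2 ⊗ₜ[k] g2
  hcomul_a1 : Coalgebra.comul (R := k) a1 = a1 ⊗ₜ[k] 1 + g1 ⊗ₜ[k] a1
  hcomul_a2 : Coalgebra.comul (R := k) a2 = a2 ⊗ₜ[k] 1 + g2 ⊗ₜ[k] a2
  hcounit_g1 : Coalgebra.counit (R := k) g1 = 1
  hcounit_g2 : Coalgebra.counit (R := k) g2 = 1
  hcounit_a1 : Coalgebra.counit (R := k) a1 = 0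
  hcounit_a2 : Coalgebra.counit (R := k) a2 = 0

end Defs

/-!
The flip `x ⊗ (y ⊗ z) ↦ (y ⊗ z) ⊗ x` and its inverse are coalgebra morphisms, and pulling back
along a coalgebra morphism preserves convolution. By the symmetry of `η` the pullback carries the
two functionals of each commutation condition to those of the other one, up to the scalar `λ`, so
each condition implies the other.
-/

section Flip

variable {R M N P A : Type*} [CommSemiring R] [AddCommMonoid M] [Module R M]
  [AddCommMonoid N] [Module R N] [AddCommMonoid P] [Module R P]

theorem comp_map_eq_smul_comp_map_comp_comm (η : P ⊗[R] P →ₗ[R] R) (c : R)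
    (hη : ∀ x y : P, η (x ⊗ₜ y) = c * η (y ⊗ₜ x)) (f : M →ₗ[R] P) (g : N →ₗ[R] P) :
    η ∘ₗ map f g = c • ((η ∘ₗ map g f) ∘ₗ (TensorProduct.comm R M N).toLinearMap) := by
  ext m n
  simp [hη (f m)]

theorem mul'_comp_map_eq_comp_comm [CommSemiring A] [Algebra R A] (f : M →ₗ[R] A)
    (g : N →ₗ[R] A) :
    LinearMap.mul' R A ∘ₗ map f g =
      (LinearMap.mul' R A ∘ₗ map g f) ∘ₗ (TensorProduct.comm R M N).toLinearMap := by
  ext m n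
  simp [mul_comm]

end Flip

section Convolution

variable {k C D : Type*} [Field k] [AddCommMonoid C] [Module k C] [CoalgebraStruct k C]
  [AddCommMonoid D] [Module k D] [CoalgebraStruct k D]

theorem conv_comp_coalgHom (f g : D →ₗ[k] k) (φ : C →ₗc[k] D) :
    conv k (f ∘ₗ φ.toLinearMap) (g ∘ₗ φ.toLinearMap) = conv k f g ∘ₗ φ.toLinearMap := by
  simp only [conv, LinearMap.comp_assoc, φ.map_comp_comul, TensorProduct.map_comp]

theorem conv_smul_left (a : k) (f g : C →ₗ[k] k) : conv k (a • f) g = a • conv k f g := by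
  simp only [conv, TensorProduct.map_smul_left, LinearMap.smul_comp, LinearMap.comp_smul]

theorem conv_smul_right (a : k) (f g : C →ₗ[k] k) : conv k f (a • g) = a • conv k f g := by
  simp only [conv, TensorProduct.map_smul_right, LinearMap.smul_comp, LinearMap.comp_smul]

theorem conv_comm_of_eq_comp_coalgHom (φ : C →ₗc[k] D) (a : k) {f g : D →ₗ[k] k}
    {f' g' : C →ₗ[k] k} (hf : f' = a • (f ∘ₗ φ.toLinearMap)) (hg : g' = g ∘ₗ φ.toLinearMap)
    (h : conv k f g = conv k g f) : conv k f' g' = conv k g' f' := by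
  rw [hf, hg, conv_smul_left, conv_smul_right, conv_comp_coalgHom, conv_comp_coalgHom, h]

end Convolution

/-- If `η : A ⊗ A → k` satisfies `η(x ⊗ y) = λ η(y ⊗ x)`, then the first
commutation identity holds for all `x, y, z ∈ A` iff the second one does. -/
theorem statement_16 {k : Type*} [Field k] {A : Type*} [Ring A] [Bialgebra k A]
    (η : A ⊗[k] A →ₗ[k] k) (lam : k)
    (hsym : ∀ x y : A, η (x ⊗ₜ[k] y) = lam * η (y ⊗ₜ[k] x)) :
    Comm1 k η ↔ Comm2 k η :=
  ⟨conv_comm_of_eq_comp_coalgHom (Bialgebra.TensorProduct.comm k (A ⊗[k] A) A) lam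
      (comp_map_eq_smul_comp_map_comp_comm η lam hsym _ _) (mul'_comp_map_eq_comp_comm _ _),
    conv_comm_of_eq_comp_coalgHom (Bialgebra.TensorProduct.comm k A (A ⊗[k] A)) lam
      (comp_map_eq_smul_comp_map_comp_comm η lam hsym _ _) (mul'_comp_map_eq_comp_comm _ _)⟩

end PaperA2
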